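/- Let r > 0. For every g ∈ X_r there exists a unique h ∈ X_r⁰ such that L h = g. Moreover the inverse operator satisfies the bound ‖L⁻¹ g‖_r = ‖h‖_r ≤ r² e^{r²/2} ‖G g‖_r, where G is the operator defined on power series by (G g)(x) = Σ_{n≥0} g_n / ((n+2)⟨n⟩) · xⁿ. -/

import Mathlib

open Set

/-- The `X_r` norm of a coefficient sequence: `‖f‖_r = Σ_n |f_n| ⟨n⟩ r^{n-1}`,
where `⟨n⟩ = max{1, n}`. -/
noncomputable def Xnorm (r : ℝ) (f : ℕ → ℝ) : ℝ :=
  ∑' n : ℕ, |f n| * max 1 (n : ℝ) * r ^ ((n : ℤ) - 1)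

/-- Membership in `X_r`: the coefficient sequence is even (vanishes on odd indices)
and has finite `X_r` norm. -/
def MemX (r : ℝ) (f : ℕ → ℝ) : Prop :=
  (∀ n, Odd n → f n = 0) ∧
  Summable (fun n : ℕ => |f n| * max 1 (n : ℝ) * r ^ ((n : ℤ) - 1))

/-- Action of the operator `L h = h'' + h'(1/x - x) + h` on coefficient sequences:
the `n`-th coefficient of `L f` is `(n+2)² f_{n+2} - (n-1) f_n`. -/
def Lcoef (f : ℕ → ℝ) (n : ℕ) : ℝ :=
  ((n : ℝ) + 2) ^ 2 * f (n + 2) - ((n : ℝ) - 1) * f n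

/-- The smoothing operator `G`: the `n`-th coefficient of `G g` is `g_n / ((n+2)⟨n⟩)`. -/
noncomputable def Gcoef (g : ℕ → ℝ) (n : ℕ) : ℝ :=
  g n / (((n : ℝ) + 2) * max 1 (n : ℝ))

/-!
Comparing coefficients, `L h = g` is the recursion `(n+2)² h_{n+2} = (n-1) h_n + g_n`, which
determines `h` from `h₀ = 0` and `h₁ = 0`. For the bound, the terms `b_m = |h_{2m}| 2m r^{2m-1}`
of `‖h‖_r` satisfy `b_{m+1} ≤ (r²/2)/(m+1) · b_m + c_m`, where the `c_m` are the terms of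
`r² ‖G g‖_r`. Unrolling this, `b_{m+1}` is bounded by the `m`-th coefficient of the Cauchy
product of `c` with the exponential series of `r²/2`, so `Σ b ≤ e^{r²/2} Σ c`.
-/

open Finset Nat

section EvenIndices

variable {α : Type*} [AddCommMonoid α] {f : ℕ → α}

theorem eq_zero_of_notMem_range_two_mul (hf : ∀ n, Odd n → f n = 0) :
    ∀ n ∉ Set.range (2 * ·), f n = 0 := fun n hn ↦
  hf n <| Nat.not_even_iff_odd.mp fun ⟨k, hk⟩ ↦ hn ⟨k, (by omega : 2 * k = n)⟩

variable [TopologicalSpace α]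

theorem summable_comp_two_mul_iff (hf : ∀ n, Odd n → f n = 0) :
    Summable (fun m ↦ f (2 * m)) ↔ Summable f :=
  (mul_right_injective₀ two_ne_zero).summable_iff (eq_zero_of_notMem_range_two_mul hf)

theorem tsum_comp_two_mul (hf : ∀ n, Odd n → f n = 0) :
    ∑' m, f (2 * m) = ∑' n, f n :=
  (mul_right_injective₀ two_ne_zero).tsum_eq fun n hn ↦
    by_contra fun h ↦ hn (eq_zero_of_notMem_range_two_mul hf n h)

end EvenIndices

section Gronwall

variable {b c : ℕ → ℝ} {s : ℝ}

theorem le_sum_antidiagonal_of_le (hs : 0 ≤ s) (hc : ∀ m, 0 ≤ c m) (hb0 : b 0 = 0)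
    (hb : ∀ m, b (m + 1) ≤ s / (m + 1) * b m + c m) (m : ℕ) :
    b (m + 1) ≤ ∑ p ∈ antidiagonal m, c p.1 * (s ^ p.2 / p.2 !) := by
  induction m with
  | zero => simpa [hb0] using hb 0
  | succ m ih =>
    have hterm : ∀ p ∈ antidiagonal m,
        s / (m + 1 + 1) * (c p.1 * (s ^ p.2 / p.2 !)) ≤ c p.1 * (s ^ (p.2 + 1) / (p.2 + 1)!) := by
      intro p hp
      have hp2 : (p.2 : ℝ) + 1 ≤ m + 1 + 1 := by
        have := HasAntidiagonal.mem_antidiagonal.mp hp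
        exact_mod_cast (by omega : p.2 + 1 ≤ m + 1 + 1)
      have hsucc : s ^ (p.2 + 1) / (p.2 + 1)! = s / (p.2 + 1) * (s ^ p.2 / p.2 !) := by
        rw [pow_succ, factorial_succ]
        push_cast
        field_simp
      rw [hsucc, mul_left_comm]
      gcongr
      exact hc _
    calc b (m + 1 + 1)
        ≤ s / (m + 1 + 1) * b (m + 1) + c (m + 1) := by exact_mod_cast hb (m + 1)
      _ ≤ s / (m + 1 + 1) * ∑ p ∈ antidiagonal m, c p.1 * (s ^ p.2 / p.2 !) + c (m + 1) := by
        gcongr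
      _ ≤ ∑ p ∈ antidiagonal m, c p.1 * (s ^ (p.2 + 1) / (p.2 + 1)!) + c (m + 1) := by
        rw [mul_sum]
        exact add_le_add (sum_le_sum hterm) le_rfl
      _ = ∑ p ∈ antidiagonal (m + 1), c p.1 * (s ^ p.2 / p.2 !) := by
        rw [Nat.sum_antidiagonal_succ']
        simp [add_comm]

theorem summable_and_tsum_le_exp_mul_of_le (hs : 0 ≤ s) (hb_nonneg : ∀ m, 0 ≤ b m)
    (hc : ∀ m, 0 ≤ c m) (hc_sum : Summable c) (hb0 : b 0 = 0)
    (hb : ∀ m, b (m + 1) ≤ s / (m + 1) * b m + c m) :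
    Summable b ∧ ∑' m, b m ≤ Real.exp s * ∑' m, c m := by
  have hexp : HasSum (fun t ↦ s ^ t / t !) (Real.exp s) := by
    rw [Real.exp_eq_exp_ℝ]
    exact NormedSpace.expSeries_div_hasSum_exp s
  have hprod : Summable fun p : ℕ × ℕ ↦ c p.1 * (s ^ p.2 / p.2 !) :=
    hc_sum.mul_of_nonneg hexp.summable (fun m ↦ hc m) fun t ↦ by dsimp only; positivity
  have hcauchy :=
    summable_sum_mul_antidiagonal_of_summable_mul (f := c) (g := fun t ↦ s ^ t / t !) hprod
  have hb_le := le_sum_antidiagonal_of_le hs hc hb0 hb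
  have hb_succ : Summable fun m ↦ b (m + 1) :=
    hcauchy.of_nonneg_of_le (fun m ↦ hb_nonneg _) hb_le
  have hb_sum : Summable b := (summable_nat_add_iff 1).mp hb_succ
  refine ⟨hb_sum, ?_⟩
  calc ∑' m, b m = ∑' m, b (m + 1) := by rw [hb_sum.tsum_eq_zero_add, hb0, zero_add]
    _ ≤ ∑' m, ∑ p ∈ antidiagonal m, c p.1 * (s ^ p.2 / p.2 !) :=
      hb_succ.tsum_le_tsum hb_le hcauchy
    _ = Real.exp s * ∑' m, c m := by
      rw [← hc_sum.tsum_mul_tsum_eq_tsum_sum_antidiagonal hexp.summable hprod, hexp.tsum_eq,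
        mul_comm]

end Gronwall

noncomputable def Linv (g : ℕ → ℝ) : ℕ → ℝ
  | 0 => 0
  | 1 => 0
  | n + 2 => (((n : ℝ) - 1) * Linv g n + g n) / ((n : ℝ) + 2) ^ 2

theorem Lcoef_Linv (g : ℕ → ℝ) (n : ℕ) : Lcoef (Linv g) n = g n := by
  simp only [Lcoef, Linv]
  field_simp
  ring

theorem Linv_odd {g : ℕ → ℝ} (hg : ∀ n, Odd n → g n = 0) (n : ℕ) (hn : Odd n) :
    Linv g n = 0 := by
  induction n using Nat.twoStepInduction with
  | zero => exact absurd hn (by decide)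
  | one => rfl
  | more n ih _ =>
    have hn' : Odd n := by simpa [parity_simps] using hn
    simp [Linv, ih hn', hg n hn']

theorem eq_Linv_of_Lcoef_eq {g h : ℕ → ℝ} (h0 : h 0 = 0) (h1 : h 1 = 0)
    (hL : ∀ n, Lcoef h n = g n) : h = Linv g := by
  funext n
  induction n using Nat.twoStepInduction with
  | zero => exact h0
  | one => exact h1
  | more n ih _ =>
    have hrec := hL n
    rw [Lcoef] at hrec
    rw [Linv, ← ih, ← hrec]
    field_simp
    ring

theorem abs_Linv_add_two_le (g : ℕ → ℝ) (n : ℕ) :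
    |Linv g (n + 2)| ≤ (max 1 (n : ℝ) * |Linv g n| + |g n|) / ((n : ℝ) + 2) ^ 2 := by
  rw [Linv, abs_div, abs_of_pos (by positivity : (0 : ℝ) < ((n : ℝ) + 2) ^ 2)]
  gcongr
  have hcoef : |(n : ℝ) - 1| ≤ max 1 (n : ℝ) := by
    rw [abs_sub_le_iff]
    constructor <;>
      linarith [le_max_left 1 (n : ℝ), le_max_right 1 (n : ℝ), n.cast_nonneg (α := ℝ)]
  calc |((n : ℝ) - 1) * Linv g n + g n| ≤ |(n : ℝ) - 1| * |Linv g n| + |g n| := by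
        rw [← abs_mul]; exact abs_add_le _ _
    _ ≤ max 1 (n : ℝ) * |Linv g n| + |g n| := by gcongr

noncomputable def Xterm (r : ℝ) (f : ℕ → ℝ) (n : ℕ) : ℝ :=
  |f n| * max 1 (n : ℝ) * r ^ ((n : ℤ) - 1)

theorem Xnorm_eq_tsum_Xterm (r : ℝ) (f : ℕ → ℝ) : Xnorm r f = ∑' n, Xterm r f n := rfl

section Xterm

variable {r : ℝ} (hr : 0 < r) (g : ℕ → ℝ)
include hr

theorem Xterm_nonneg (f : ℕ → ℝ) (n : ℕ) : 0 ≤ Xterm r f n := by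
  unfold Xterm
  have := zpow_pos hr ((n : ℤ) - 1)
  positivity

theorem Xterm_Gcoef_le (n : ℕ) : Xterm r (Gcoef g) n ≤ Xterm r g n := by
  unfold Xterm Gcoef
  have hden : 1 ≤ ((n : ℝ) + 2) * max 1 (n : ℝ) := by
    nlinarith [le_max_left 1 (n : ℝ), n.cast_nonneg (α := ℝ)]
  have := zpow_pos hr ((n : ℤ) - 1)
  rw [abs_div, abs_of_pos (by linarith : (0 : ℝ) < ((n : ℝ) + 2) * max 1 (n : ℝ))]
  gcongr
  exact div_le_self (abs_nonneg _) hden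

theorem Xterm_Linv_add_two_le (n : ℕ) :
    Xterm r (Linv g) (n + 2) ≤
      r ^ 2 / ((n : ℝ) + 2) * Xterm r (Linv g) n + r ^ 2 * Xterm r (Gcoef g) n := by
  have hmax : max 1 (((n + 2 : ℕ)) : ℝ) = (n : ℝ) + 2 := by
    rw [max_eq_right] <;> push_cast <;> linarith [n.cast_nonneg (α := ℝ)]
  have hpow : r ^ (((n + 2 : ℕ) : ℤ) - 1) = r ^ 2 * r ^ ((n : ℤ) - 1) := by
    rw [← zpow_natCast, ← zpow_add₀ hr.ne']
    congr 1
    push_cast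
    ring
  unfold Xterm Gcoef
  rw [hmax, hpow, abs_div, abs_of_pos (by positivity : 0 < ((n : ℝ) + 2) * max 1 (n : ℝ))]
  calc |Linv g (n + 2)| * ((n : ℝ) + 2) * (r ^ 2 * r ^ ((n : ℤ) - 1))
      ≤ (max 1 (n : ℝ) * |Linv g n| + |g n|) / ((n : ℝ) + 2) ^ 2 * ((n : ℝ) + 2) *
          (r ^ 2 * r ^ ((n : ℤ) - 1)) := by
        gcongr
        exact abs_Linv_add_two_le g n
    _ = _ := by field_simp

theorem memX_Gcoef (hg : MemX r g) : MemX r (Gcoef g) :=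
  ⟨fun n hn ↦ by simp [Gcoef, hg.1 n hn],
    hg.2.of_nonneg_of_le (Xterm_nonneg hr _) (Xterm_Gcoef_le hr g)⟩

theorem memX_Linv_and_Xnorm_Linv_le (hg : MemX r g) :
    MemX r (Linv g) ∧ Xnorm r (Linv g) ≤ r ^ 2 * Real.exp (r ^ 2 / 2) * Xnorm r (Gcoef g) := by
  have hodd : ∀ n, Odd n → Xterm r (Linv g) n = 0 := fun n hn ↦ by
    simp [Xterm, Linv_odd hg.1 n hn]
  have hGodd : ∀ n, Odd n → Xterm r (Gcoef g) n = 0 := fun n hn ↦ by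
    simp [Xterm, (memX_Gcoef hr g hg).1 n hn]
  have hGsum : Summable fun m ↦ r ^ 2 * Xterm r (Gcoef g) (2 * m) :=
    ((summable_comp_two_mul_iff hGodd).mpr (memX_Gcoef hr g hg).2).mul_left _
  have hrec (m : ℕ) : Xterm r (Linv g) (2 * (m + 1)) ≤
      r ^ 2 / 2 / ((m : ℝ) + 1) * Xterm r (Linv g) (2 * m) +
        r ^ 2 * Xterm r (Gcoef g) (2 * m) := by
    have hcoef : r ^ 2 / 2 / ((m : ℝ) + 1) = r ^ 2 / (((2 * m : ℕ) : ℝ) + 2) := by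
      push_cast
      field_simp
    rw [hcoef, Nat.mul_add_one]
    exact Xterm_Linv_add_two_le hr g (2 * m)
  obtain ⟨hsum, hle⟩ := summable_and_tsum_le_exp_mul_of_le (by positivity)
    (fun m ↦ Xterm_nonneg hr _ _) (fun m ↦ mul_nonneg (sq_nonneg r) (Xterm_nonneg hr _ _)) hGsum
    (by simp [Xterm, Linv]) hrec
  refine ⟨⟨Linv_odd hg.1, (summable_comp_two_mul_iff hodd).mp hsum⟩, ?_⟩
  calc Xnorm r (Linv g) = ∑' m, Xterm r (Linv g) (2 * m) := by
        rw [Xnorm_eq_tsum_Xterm, tsum_comp_two_mul hodd]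
    _ ≤ Real.exp (r ^ 2 / 2) * ∑' m, r ^ 2 * Xterm r (Gcoef g) (2 * m) := hle
    _ = r ^ 2 * Real.exp (r ^ 2 / 2) * Xnorm r (Gcoef g) := by
      rw [tsum_mul_left, tsum_comp_two_mul hGodd, Xnorm_eq_tsum_Xterm]
      ring

end Xterm

/-- For every `r > 0` and `g ∈ X_r` there is a unique `h ∈ X_r⁰` with `L h = g`;
moreover `‖L⁻¹ g‖_r = ‖h‖_r ≤ r² e^{r²/2} ‖G g‖_r`. -/
theorem L_inverse_analytic (r : ℝ) (hr : 0 < r) (g : ℕ → ℝ) (hg : MemX r g) :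
    ∃ h : ℕ → ℝ,
      (MemX r h ∧ h 0 = 0 ∧ ∀ n, Lcoef h n = g n) ∧
      (∀ h' : ℕ → ℝ, (MemX r h' ∧ h' 0 = 0 ∧ ∀ n, Lcoef h' n = g n) → h' = h) ∧
      Xnorm r h ≤ r ^ 2 * Real.exp (r ^ 2 / 2) * Xnorm r (Gcoef g) := by
  obtain ⟨hmem, hbound⟩ := memX_Linv_and_Xnorm_Linv_le hr g hg
  refine ⟨Linv g, ⟨hmem, rfl, Lcoef_Linv g⟩, ?_, hbound⟩
  rintro h ⟨⟨hodd, -⟩, h0, hL⟩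
  exact eq_Linv_of_Lcoef_eq h0 (hodd 1 odd_one) hL
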